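/- arXiv:1907.09306 — 6 statements merged into one kernel-verified Lean document; each statement's English description precedes it below -/
import Mathlib

section
/- Every I-Luzin set is I-nonmeasurable if and only if I is tall. That is: (every set L such that |L ∩ I'| < |L| for all I' ∈ I fails to belong to the σ-field generated by Borel sets and I) if and only if (every Borel set not in I contains a perfect subset belonging to I). -/
/-!
Modulo a σ-ideal `I` with a Borel base, every set of `σ(Borel ∪ I)` is a Borel set `B` up to a
Borel set `M ∈ I`. If `I` is tall and `L` is `I`-Luzin, then `B \ M ∉ I` (otherwise `L` would be
covered by a member of `I`), so `B \ M` contains a perfect set `P ∈ I`; but `P ⊆ L` and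
`#L ≤ 𝔠 ≤ #P`, contradicting `#(L ∩ P) < #L`. Conversely, if a Borel set `B ∉ I` has no perfect
subset in `I`, then `B` meets every Borel member of `I` in a Borel set without perfect subsets,
hence in a countable set, while `B` itself is uncountable: `B` is an `I`-Luzin set that is Borel.
-/

open Cardinal Set MeasurableSpace
open scoped MeasureTheory symmDiff

section

variable {X : Type*}

section Polish

theorem Cardinal.mk_le_continuum_of_countablySeparated [MeasurableSpace X]
    [CountablySeparated X] : #X ≤ 𝔠 := by
  obtain ⟨f, -, hf⟩ := measurable_injection_nat_bool_of_countablySeparated X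
  simpa using lift_mk_le_lift_mk_of_injective hf

variable [TopologicalSpace X] [PolishSpace X]

theorem Perfect.continuum_le_mk {P : Set X} (hP : Perfect P) (hne : P.Nonempty) : 𝔠 ≤ #P := by
  let := TopologicalSpace.upgradeIsCompletelyMetrizable X
  obtain ⟨f, hfP, -, hf⟩ := hP.exists_nat_bool_injection hne
  simpa using lift_mk_le_lift_mk_of_injective
    (hf.codRestrict (fun a => hfP (mem_range_self a)) : Function.Injective (codRestrict f P _))

variable [MeasurableSpace X] [BorelSpace X]

theorem MeasurableSet.exists_nat_bool_injection_of_not_countable {D : Set X}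
    (hD : MeasurableSet D) (hunc : ¬D.Countable) :
    ∃ f : (ℕ → Bool) → X, range f ⊆ D ∧ Continuous f ∧ Function.Injective f := by
  obtain ⟨t, ht_le, _, hD_closed, -⟩ := hD.isClopenable
  obtain ⟨f, hfD, hf_cont, hf⟩ := hD_closed.exists_nat_bool_injection_of_not_countable hunc
  exact ⟨f, hfD, continuous_le_rng ht_le hf_cont, hf⟩

theorem MeasurableSet.exists_perfect_nonempty_of_not_countable {D : Set X}
    (hD : MeasurableSet D) (hunc : ¬D.Countable) : ∃ P ⊆ D, Perfect P ∧ P.Nonempty := by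
  obtain ⟨f, hfD, hf_cont, hf⟩ := hD.exists_nat_bool_injection_of_not_countable hunc
  have hf_unc : ¬(range f).Countable := fun h => by
    have h_cantor : Countable (ℕ → Bool) := countable_univ_iff.1 (by simpa using h.preimage hf)
    rw [← mk_le_aleph0_iff] at h_cantor
    simpa using h_cantor.trans_lt aleph0_lt_continuum
  obtain ⟨P, hP, hne, hPf⟩ :=
    exists_perfect_nonempty_of_isClosed_of_not_countable (isCompact_range hf_cont).isClosed hf_unc
  exact ⟨P, hPf.trans hfD, hP, hne⟩

end Polish

structure IsSigmaIdeal (I : Set (Set X)) : Prop where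
  mono : ∀ ⦃s t : Set X⦄, s ⊆ t → t ∈ I → s ∈ I
  sUnion_mem : ∀ S : Set (Set X), S.Countable → S ⊆ I → ⋃₀ S ∈ I

def IsLuzinSet (I : Set (Set X)) (L : Set X) : Prop :=
  ∀ I' ∈ I, #↥(L ∩ I') < #L

variable {I : Set (Set X)}

theorem IsLuzinSet.notMem {L : Set X} (hL : IsLuzinSet I L) : L ∉ I :=
  fun h => (hL L h).ne (by rw [inter_self])

namespace IsSigmaIdeal

theorem of_iUnion_mem (hdown : ∀ A B : Set X, A ⊆ B → B ∈ I → A ∈ I)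
    (hunion : ∀ f : ℕ → Set X, (∀ n, f n ∈ I) → (⋃ n, f n) ∈ I) (hne : I.Nonempty) :
    IsSigmaIdeal I := by
  refine ⟨fun s t hst ht => hdown s t hst ht, fun S hS hSI => ?_⟩
  rcases S.eq_empty_or_nonempty with rfl | hS_ne
  · obtain ⟨t, ht⟩ := hne
    simpa using hdown ∅ t (empty_subset t) ht
  · obtain ⟨f, rfl⟩ := hS.exists_eq_range hS_ne
    rw [sUnion_range]
    exact hunion f fun n => hSI (mem_range_self n)

variable (hI : IsSigmaIdeal I)
include hI

theorem union_mem {s t : Set X} (hs : s ∈ I) (ht : t ∈ I) : s ∪ t ∈ I := by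
  simpa using hI.sUnion_mem {s, t} (by simp) (by simp [insert_subset_iff, hs, ht])

theorem countable_mem (hsing : ∀ x : X, ({x} : Set X) ∈ I) {s : Set X} (hs : s.Countable) :
    s ∈ I := by
  simpa using hI.sUnion_mem ((fun x => {x}) '' s) (hs.image _)
    (by simpa [subset_def] using fun x _ => hsing x)

theorem exists_measurableSet_symmDiff_mem [MeasurableSpace X] {s : Set X}
    (hs : MeasurableSet[generateFrom {t | MeasurableSet t ∨ t ∈ I}] s) :
    ∃ t, MeasurableSet t ∧ s ∆ t ∈ I := by
  obtain ⟨l, _, hl⟩ : ∃ l : Filter X, CountableInterFilter l ∧ ∀ u, u ∈ l ↔ uᶜ ∈ I :=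
    ⟨.ofCountableUnion I hI.sUnion_mem fun t ht _ hst => hI.mono hst ht,
      Filter.countableInter_ofCountableUnion .., fun _ => Iff.rfl⟩
  have hle : generateFrom {t | MeasurableSet t ∨ t ∈ I} ≤ eventuallyMeasurableSpace ‹_› l := by
    refine generateFrom_le fun t ht => ht.elim MeasurableSet.eventuallyMeasurableSet fun htI => ?_
    refine ⟨∅, .empty, ?_⟩
    rw [Filter.eventuallyEq_empty, Filter.eventually_iff, hl]
    convert htI using 1
    ext x
    simp
  obtain ⟨t, ht, hst⟩ := hle s hs
  refine ⟨t, ht, ?_⟩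
  rw [Filter.eventuallyEq_set, Filter.eventually_iff, hl] at hst
  convert hst using 1
  ext x
  simp only [mem_symmDiff, mem_compl_iff, mem_ofPred_eq]
  tauto

variable [TopologicalSpace X] [PolishSpace X] [MeasurableSpace X] [BorelSpace X]
  (hbase : ∀ A ∈ I, ∃ B : Set X, MeasurableSet B ∧ A ⊆ B ∧ B ∈ I)
include hbase

theorem isLuzinSet_of_forall_perfect_notMem (hsing : ∀ x : X, ({x} : Set X) ∈ I) {B : Set X}
    (hB : MeasurableSet B) (hBI : B ∉ I)
    (hperf : ∀ P ⊆ B, Perfect P → P.Nonempty → P ∉ I) : IsLuzinSet I B := by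
  intro I' hI'
  obtain ⟨C, hC, hI'C, hCI⟩ := hbase I' hI'
  have hBC : (B ∩ C).Countable := by
    by_contra h
    obtain ⟨P, hPBC, hP, hne⟩ := (hB.inter hC).exists_perfect_nonempty_of_not_countable h
    exact hperf P (hPBC.trans inter_subset_left) hP hne (hI.mono (hPBC.trans inter_subset_right) hCI)
  have hB_unc : ¬B.Countable := fun h => hBI (hI.countable_mem hsing h)
  calc #↥(B ∩ I') ≤ ℵ₀ := mk_le_aleph0_iff.2 (hBC.mono (inter_subset_inter_right B hI'C)).to_subtype
    _ < #B := by rwa [← not_le, mk_le_aleph0_iff, countable_coe_iff]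

theorem not_measurableSet_of_isLuzinSet
    (htall : ∀ B : Set X, MeasurableSet B → B ∉ I → ∃ P ⊆ B, Perfect P ∧ P.Nonempty ∧ P ∈ I)
    {L : Set X} (hL : IsLuzinSet I L) :
    ¬MeasurableSet[generateFrom {t | MeasurableSet t ∨ t ∈ I}] L := by
  intro hmeas
  obtain ⟨B, hB, hLB⟩ := hI.exists_measurableSet_symmDiff_mem hmeas
  obtain ⟨M, hM, hLBM, hMI⟩ := hbase _ hLB
  have hBM : B \ M ∉ I := by
    refine fun h => hL.notMem (hI.mono (fun x hx => ?_) (hI.union_mem h hMI))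
    by_cases hxM : x ∈ M
    · exact .inr hxM
    · exact .inl ⟨by_contra fun hxB => hxM (hLBM (.inl ⟨hx, hxB⟩)), hxM⟩
  obtain ⟨P, hPBM, hP, hne, hPI⟩ := htall (B \ M) (hB.diff hM) hBM
  have hPL : P ⊆ L := fun x hx =>
    by_contra fun hxL => (hPBM hx).2 (hLBM (.inr ⟨(hPBM hx).1, hxL⟩))
  have hPL_lt : #P < #L := by simpa [inter_eq_right.2 hPL] using hL P hPI
  refine hPL_lt.not_ge ?_
  calc #L ≤ #X := mk_set_le L
    _ ≤ 𝔠 := mk_le_continuum_of_countablySeparated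
    _ ≤ #P := hP.continuum_le_mk hne

end IsSigmaIdeal

end

theorem stmt_0_general {X : Type*} [TopologicalSpace X] [PolishSpace X]
    [MeasurableSpace X] [BorelSpace X] (I : Set (Set X))
    (hdown : ∀ A B : Set X, A ⊆ B → B ∈ I → A ∈ I)
    (hunion : ∀ f : ℕ → Set X, (∀ n, f n ∈ I) → (⋃ n, f n) ∈ I)
    (hsing : ∀ x : X, ({x} : Set X) ∈ I)
    (hbase : ∀ A ∈ I, ∃ B : Set X, MeasurableSet B ∧ A ⊆ B ∧ B ∈ I) :
    (∀ L : Set X, (∀ I' ∈ I, #(↥(L ∩ I')) < #(↥L)) →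
      ¬ @MeasurableSet X (MeasurableSpace.generateFrom {s : Set X | MeasurableSet s ∨ s ∈ I}) L)
    ↔
    (∀ B : Set X, MeasurableSet B → B ∉ I →
      ∃ P ⊆ B, Perfect P ∧ P.Nonempty ∧ P ∈ I) := by
  constructor
  · intro hLuzin
    have hne : I.Nonempty := by
      by_contra! hI
      exact hLuzin ∅ (by simp [hI]) (measurableSet_generateFrom (.inl .empty))
    by_contra! hnot
    obtain ⟨B, hB, hBI, hperf⟩ := hnot
    refine hLuzin B ?_ (measurableSet_generateFrom (.inl hB))
    exact (IsSigmaIdeal.of_iUnion_mem hdown hunion hne).isLuzinSet_of_forall_perfect_notMem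
      hbase hsing hB hBI hperf
  · intro htall L hL
    have hne : I.Nonempty := by
      by_contra! hI
      obtain ⟨P, hP, -, hPne, -⟩ := htall ∅ .empty (by simp [hI])
      exact hPne.ne_empty (subset_empty_iff.1 hP)
    exact (IsSigmaIdeal.of_iUnion_mem hdown hunion hne).not_measurableSet_of_isLuzinSet hbase htall hL

/-- Every I-Luzin set is I-nonmeasurable iff I is tall. -/
theorem stmt_0 {X : Type*} [TopologicalSpace X] [PolishSpace X]
    [MeasurableSpace X] [BorelSpace X] (I : Set (Set X))
    (hdown : ∀ A B : Set X, A ⊆ B → B ∈ I → A ∈ I)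
    (hunion : ∀ f : ℕ → Set X, (∀ n, f n ∈ I) → (⋃ n, f n) ∈ I)
    (hnontriv : (Set.univ : Set X) ∉ I)
    (hsing : ∀ x : X, ({x} : Set X) ∈ I)
    (hbase : ∀ A ∈ I, ∃ B : Set X, MeasurableSet B ∧ A ⊆ B ∧ B ∈ I) :
    (∀ L : Set X, (∀ I' ∈ I, #(↥(L ∩ I')) < #(↥L)) →
      ¬ @MeasurableSet X (MeasurableSpace.generateFrom {s : Set X | MeasurableSet s ∨ s ∈ I}) L)
    ↔
    (∀ B : Set X, MeasurableSet B → B ∉ I →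
      ∃ P ⊆ B, Perfect P ∧ P.Nonempty ∧ P ∈ I) :=
  stmt_0_general I hdown hunion hsing hbase
end

section
/- If I has the Weaker Smital Property, then every Borel I-positive set B contains a set A' with A' ∉ I and |A'| = non(I). -/
open Cardinal Pointwise

/-!
Take `A ∉ I` of size `non(I)`. Since `(D + B)ᶜ ∈ I`, the set `A ∩ (D + B)` is `I`-positive, and as
`D + B` is the countable union of the translates `d + B`, some `A ∩ (d + B)` is `I`-positive.
Translating it back by `-d` gives an `I`-positive subset of `B` of size at most `|A| = non(I)`.
-/

theorem iUnion_mem_of_countable {α ι : Type*} [Countable ι] [Nonempty ι] {I : Set (Set α)}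
    (hunion : ∀ f : ℕ → Set α, (∀ n, f n ∈ I) → (⋃ n, f n) ∈ I)
    {f : ι → Set α} (hf : ∀ i, f i ∈ I) : (⋃ i, f i) ∈ I := by
  obtain ⟨g, hg⟩ := exists_surjective_nat ι
  rw [← hg.iUnion_comp]
  exact hunion _ fun n => hf (g n)

theorem union_mem_of_iUnion_mem {α : Type*} {I : Set (Set α)}
    (hunion : ∀ f : ℕ → Set α, (∀ n, f n ∈ I) → (⋃ n, f n) ∈ I)
    {X Y : Set α} (hX : X ∈ I) (hY : Y ∈ I) : X ∪ Y ∈ I := by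
  rw [Set.union_eq_iUnion]
  exact iUnion_mem_of_countable hunion fun b => by cases b <;> assumption

theorem exists_inter_notMem_of_compl_iUnion_mem {α ι : Type*} [Countable ι] [Nonempty ι]
    {I : Set (Set α)} (hdown : ∀ A B : Set α, A ⊆ B → B ∈ I → A ∈ I)
    (hunion : ∀ f : ℕ → Set α, (∀ n, f n ∈ I) → (⋃ n, f n) ∈ I)
    {f : ι → Set α} (hf : (⋃ i, f i)ᶜ ∈ I) {A : Set α} (hA : A ∉ I) : ∃ i, A ∩ f i ∉ I := by
  by_contra! h
  refine hA (hdown _ _ ?_ (union_mem_of_iUnion_mem hunion (iUnion_mem_of_countable hunion h) hf))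
  intro x hx
  by_cases hxf : x ∈ ⋃ i, f i
  · obtain ⟨i, hi⟩ := Set.mem_iUnion.1 hxf
    exact Or.inl (Set.mem_iUnion.2 ⟨i, hx, hi⟩)
  · exact Or.inr hxf

theorem vadd_mem_of_neg_add_image_mem {G : Type*} [AddCommGroup G] {I : Set (Set G)}
    (hinv : ∀ (x : G) (A : Set G), A ∈ I → (fun a => -a + x) '' A ∈ I)
    (x : G) {A : Set G} (hA : A ∈ I) : x +ᵥ A ∈ I := by
  convert hinv x _ (hinv 0 A hA) using 1
  rw [Set.image_image, ← Set.image_vadd]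
  simp [add_comm]

theorem exists_subset_notMem_mk_le {G : Type*} [AddGroup G] {I : Set (Set G)}
    (hdown : ∀ A B : Set G, A ⊆ B → B ∈ I → A ∈ I)
    (hunion : ∀ f : ℕ → Set G, (∀ n, f n ∈ I) → (⋃ n, f n) ∈ I)
    (hvadd : ∀ (x : G) (A : Set G), A ∈ I → x +ᵥ A ∈ I)
    {D B A : Set G} (hD : D.Countable) (hDne : D.Nonempty) (hDB : (D + B)ᶜ ∈ I) (hA : A ∉ I) :
    ∃ A' ⊆ B, A' ∉ I ∧ #A' ≤ #A := by
  have : Countable D := hD.to_subtype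
  have : Nonempty D := hDne.to_subtype
  rw [← Set.iUnion_add_left_image, Set.biUnion_eq_iUnion] at hDB
  obtain ⟨⟨d, _⟩, hd⟩ := exists_inter_notMem_of_compl_iUnion_mem hdown hunion hDB hA
  change A ∩ (d +ᵥ B) ∉ I at hd
  refine ⟨-d +ᵥ (A ∩ (d +ᵥ B)), ?_, fun h => hd ?_, ?_⟩
  · exact (Set.vadd_set_mono Set.inter_subset_right).trans (neg_vadd_vadd d B).subset
  · simpa using hvadd d _ h
  · rw [mk_vadd_set]
    exact mk_le_mk_of_subset Set.inter_subset_left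

theorem stmt_3_general (I : Set (Set ℝ))
    (hdown : ∀ A B : Set ℝ, A ⊆ B → B ∈ I → A ∈ I)
    (hunion : ∀ f : ℕ → Set ℝ, (∀ n, f n ∈ I) → (⋃ n, f n) ∈ I)
    (hinv : ∀ (x : ℝ) (A : Set ℝ), A ∈ I → (fun a => -a + x) '' A ∈ I)
    (hWSP : ∃ D : Set ℝ, D.Countable ∧ Dense D ∧
      ∀ B : Set ℝ, MeasurableSet B → B ∉ I → (D + B)ᶜ ∈ I) :
    ∀ B : Set ℝ, MeasurableSet B → B ∉ I →
      ∃ A' ⊆ B, A' ∉ I ∧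
        #(↥A') = sInf {c : Cardinal | ∃ A : Set ℝ, A ∉ I ∧ #(↥A) = c} := by
  intro B hB hBI
  obtain ⟨D, hD, hDdense, hWSP⟩ := hWSP
  set S := {c : Cardinal | ∃ A : Set ℝ, A ∉ I ∧ #(↥A) = c}
  obtain ⟨A, hA, hAmin⟩ := csInf_mem (⟨#B, B, hBI, rfl⟩ : S.Nonempty)
  obtain ⟨A', hA'B, hA', hA'A⟩ := exists_subset_notMem_mk_le hdown hunion
    (vadd_mem_of_neg_add_image_mem hinv) hD hDdense.nonempty (hWSP B hB hBI) hA
  exact ⟨A', hA'B, hA', (hA'A.trans_eq hAmin).antisymm (csInf_le' ⟨A', hA', rfl⟩)⟩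

/-- The Weaker Smital Property implies every Borel I-positive set
contains a witness for non(I). -/
theorem stmt_3 (I : Set (Set ℝ))
    (hdown : ∀ A B : Set ℝ, A ⊆ B → B ∈ I → A ∈ I)
    (hunion : ∀ f : ℕ → Set ℝ, (∀ n, f n ∈ I) → (⋃ n, f n) ∈ I)
    (hnontriv : (Set.univ : Set ℝ) ∉ I)
    (hsing : ∀ x : ℝ, ({x} : Set ℝ) ∈ I)
    (hbase : ∀ A ∈ I, ∃ B : Set ℝ, MeasurableSet B ∧ A ⊆ B ∧ B ∈ I)
    (hinv : ∀ (x : ℝ) (A : Set ℝ), A ∈ I → (fun a => -a + x) '' A ∈ I)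
    (hWSP : ∃ D : Set ℝ, D.Countable ∧ Dense D ∧
      ∀ B : Set ℝ, MeasurableSet B → B ∉ I → (D + B)ᶜ ∈ I) :
    ∀ B : Set ℝ, MeasurableSet B → B ∉ I →
      ∃ A' ⊆ B, A' ∉ I ∧
        #(↥A') = sInf {c : Cardinal | ∃ A : Set ℝ, A ∉ I ∧ #(↥A) = c} :=
  stmt_3_general I hdown hunion hinv hWSP
end

section
/- If I is ccc and satisfies the Fubini Property, then every Borel I-positive set B contains a set of the form B ∩ (A - x) that is I-positive for some A ∉ I with |A| = non(I) and some x ∈ ℝ; consequently every Borel I-positive set contains a witness for non(I), i.e. a subset A' ∉ I with |A'| = non(I). -/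
/-!
Let `A ∉ I` have size `non(I)` and let `H ⊇ A` be a Borel hull of `A` modulo `I`, which exists by
ccc. If `B ∩ (A - x) ∈ I` for every `x`, then every vertical section `B ∩ (H - x)` of the Borel
set `C = {(x, y) | y ∈ B, x + y ∈ H}` lies in `I`, while for `y ∈ B` the horizontal section
`H - y ⊇ A - y` is `I`-positive; the Fubini Property then puts `B` in `I`. So some
`B ∩ (A - x)` is `I`-positive, and it has size at most `|A| = non(I)`.
-/

open Cardinal Set

structure IsSigmaIdeal_s6 {α : Type*} (I : Set (Set α)) : Prop where
  mono : ∀ A B : Set α, A ⊆ B → B ∈ I → A ∈ I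
  iUnion_mem : ∀ f : ℕ → Set α, (∀ n, f n ∈ I) → (⋃ n, f n) ∈ I
  empty_mem : ∅ ∈ I

theorem IsSigmaIdeal_s6.sUnion_mem {α : Type*} {I : Set (Set α)} (hI : IsSigmaIdeal_s6 I)
    {S : Set (Set α)} (hS : S.Countable) (hSI : S ⊆ I) : ⋃₀ S ∈ I := by
  rcases S.eq_empty_or_nonempty with rfl | hne
  · simpa using hI.empty_mem
  · obtain ⟨f, rfl⟩ := hS.exists_eq_range hne
    rw [sUnion_range]
    exact hI.iUnion_mem f fun n => hSI ⟨n, rfl⟩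

noncomputable def nonCard {α : Type*} (I : Set (Set α)) : Cardinal :=
  sInf {c | ∃ A : Set α, A ∉ I ∧ #A = c}

theorem exists_mk_eq_nonCard {α : Type*} {I : Set (Set α)} {A : Set α} (hA : A ∉ I) :
    ∃ A' : Set α, A' ∉ I ∧ #A' = nonCard I :=
  csInf_mem (⟨_, A, hA, rfl⟩ : {c | ∃ A : Set α, A ∉ I ∧ #A = c}.Nonempty)

theorem nonCard_le_mk {α : Type*} {I : Set (Set α)} {A : Set α} (hA : A ∉ I) :
    nonCard I ≤ #A :=
  csInf_le' ⟨A, hA, rfl⟩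

section Borel

variable {α : Type*} [MeasurableSpace α] {I : Set (Set α)}

def IsCCC (I : Set (Set α)) : Prop :=
  ∀ F : Set (Set α), (∀ B ∈ F, MeasurableSet B ∧ B ∉ I) → F.PairwiseDisjoint id → F.Countable

def HasFubiniProperty (I : Set (Set α)) : Prop :=
  ∀ C : Set (α × α), MeasurableSet C →
    {x | {y | (x, y) ∈ C} ∉ I} ∈ I → {y | {x | (x, y) ∈ C} ∉ I} ∈ I

structure IsBorelHull (I : Set (Set α)) (A H : Set α) : Prop where
  measurableSet : MeasurableSet H
  subset : A ⊆ H
  inter_mem : ∀ W, MeasurableSet W → W ∩ A ∈ I → W ∩ H ∈ I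

/-- A maximal antichain of sets satisfying `P`, which is countable by ccc. -/
theorem IsCCC.exists_countable_maximal (hccc : IsCCC I) (P : Set α → Prop)
    (hP : ∀ W, P W → MeasurableSet W ∧ W ∉ I) :
    ∃ F : Set (Set α), F.Countable ∧ (∀ W ∈ F, P W) ∧
      ∀ W, P W → (∀ V ∈ F, Disjoint W V) → W ∈ F := by
  let S : Set (Set (Set α)) := {F | (∀ W ∈ F, P W) ∧ F.PairwiseDisjoint id}
  obtain ⟨F, hFS, hFmax⟩ := zorn_subset S fun c hc hchain => by
    refine ⟨⋃₀ c, ⟨?_, ?_⟩, fun F hF => subset_sUnion_of_mem hF⟩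
    · rintro W ⟨F, hF, hWF⟩
      exact (hc hF).1 W hWF
    · rintro X ⟨F₁, hF₁, hX⟩ Y ⟨F₂, hF₂, hY⟩ hXY
      rcases hchain.total hF₁ hF₂ with h | h
      · exact (hc hF₂).2 (h hX) hY hXY
      · exact (hc hF₁).2 hX (h hY) hXY
  refine ⟨F, hccc F (fun W hW => hP W (hFS.1 W hW)) hFS.2, hFS.1, fun W hW hdisj => ?_⟩
  have hins : insert W F ∈ S :=
    ⟨forall_mem_insert.2 ⟨hW, hFS.1⟩,
      pairwiseDisjoint_insert.2 ⟨hFS.2, fun V hV _ => hdisj V hV⟩⟩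
  exact hFmax hins (subset_insert W F) (mem_insert W F)

/-- Take a maximal antichain `F` of Borel `I`-positive sets meeting `A` in a set from `I`, and
cover each `W ∩ A` (`W ∈ F`) by a Borel set `N W ∈ I`; outside `⋃ F` nothing needs covering. -/
theorem exists_isBorelHull (hI : IsSigmaIdeal_s6 I)
    (hbase : ∀ A ∈ I, ∃ B : Set α, MeasurableSet B ∧ A ⊆ B ∧ B ∈ I) (hccc : IsCCC I)
    (A : Set α) : ∃ H, IsBorelHull I A H := by
  obtain ⟨F, hFc, hFP, hFmax⟩ := hccc.exists_countable_maximal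
    (fun W => MeasurableSet W ∧ W ∉ I ∧ W ∩ A ∈ I) fun W hW => ⟨hW.1, hW.2.1⟩
  choose! N hNm hAN hNI using fun W hW => hbase (W ∩ A) (hFP W hW).2.2
  have hFm : MeasurableSet (⋃₀ F) := .sUnion hFc fun W hW => (hFP W hW).1
  refine ⟨(⋃₀ F)ᶜ ∪ ⋃₀ (N '' F),
    hFm.compl.union (.sUnion (hFc.image N) (forall_mem_image.2 hNm)), ?_, ?_⟩
  · intro a ha
    by_cases h : a ∈ ⋃₀ F
    · obtain ⟨W, hW, haW⟩ := h
      exact Or.inr ⟨N W, mem_image_of_mem N hW, hAN W hW ⟨haW, ha⟩⟩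
    · exact Or.inl h
  · intro W hW hWA
    have hWF : W \ ⋃₀ F ∈ I := by
      by_contra hpos
      have hmem : W \ ⋃₀ F ∈ F :=
        hFmax _ ⟨hW.diff hFm, hpos, hI.mono _ _ (inter_subset_inter_left A sdiff_subset) hWA⟩
          fun V hV => disjoint_sdiff_left.mono_right (subset_sUnion_of_mem hV)
      rw [disjoint_sdiff_left.eq_bot_of_le (subset_sUnion_of_mem hmem)] at hpos
      exact hpos hI.empty_mem
    refine hI.mono _ _ ?_
      (hI.sUnion_mem ((hFc.image N).insert _) (insert_subset hWF (image_subset_iff.2 hNI)))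
    rintro z ⟨hzW, hz | hz⟩
    · exact ⟨_, mem_insert _ _, hzW, hz⟩
    · exact sUnion_mono (subset_insert _ _) hz

end Borel

theorem preimage_add_const_mem {G : Type*} [AddGroup G] {I : Set (Set G)}
    (hinv : ∀ (x : G) (A : Set G), A ∈ I → (fun a => -a + x) '' A ∈ I) (t : G) {X : Set G}
    (hX : X ∈ I) : (· + t) ⁻¹' X ∈ I := by
  have h := hinv (-t) _ (hinv 0 X hX)
  rw [image_image] at h
  rw [← image_sub_right]
  simpa [sub_eq_add_neg] using h

theorem exists_inter_preimage_add_not_mem {G : Type*} [AddCommGroup G] [MeasurableSpace G]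
    [MeasurableAdd₂ G] {I : Set (Set G)} (hI : IsSigmaIdeal_s6 I)
    (htrans : ∀ (t : G) (X : Set G), X ∈ I → (· + t) ⁻¹' X ∈ I) (hFub : HasFubiniProperty I)
    {A H B : Set G} (hAH : IsBorelHull I A H) (hA : A ∉ I) (hB : MeasurableSet B)
    (hBI : B ∉ I) : ∃ x, B ∩ (· + x) ⁻¹' A ∉ I := by
  by_contra! hsmall
  let C : Set (G × G) := {p | p.2 ∈ B ∧ p.1 + p.2 ∈ H}
  have hC : MeasurableSet C :=
    (measurable_snd hB).inter ((measurable_fst.add measurable_snd) hAH.measurableSet)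
  have hrow : ∀ x, {y | (x, y) ∈ C} ∈ I := by
    intro x
    have hW : (· + -x) ⁻¹' B ∩ A ∈ I := by
      convert htrans (-x) _ (hsmall x) using 1
      ext a
      simp
    convert htrans x _ (hAH.inter_mem _ (measurable_add_const _ hB) hW) using 1
    ext y
    simp [C, add_comm]
  have hcol : B ⊆ {y | {x | (x, y) ∈ C} ∉ I} := by
    intro y hy hyI
    have hAy : (· + y) ⁻¹' A ∈ I :=
      hI.mono _ _ (fun a (ha : a + y ∈ A) => show (a, y) ∈ C from ⟨hy, hAH.subset ha⟩) hyI
    exact hA (by simpa [preimage_preimage] using htrans (-y) _ hAy)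
  have hrows : {x | {y | (x, y) ∈ C} ∉ I} ∈ I := by
    simpa only [hrow, not_true_eq_false, ofPred_false] using hI.empty_mem
  exact hBI (hI.mono _ _ hcol (hFub C hC hrows))

theorem stmt_6_general (I : Set (Set ℝ))
    (hdown : ∀ A B : Set ℝ, A ⊆ B → B ∈ I → A ∈ I)
    (hunion : ∀ f : ℕ → Set ℝ, (∀ n, f n ∈ I) → (⋃ n, f n) ∈ I)
    (hsing : ∀ x : ℝ, ({x} : Set ℝ) ∈ I)
    (hbase : ∀ A ∈ I, ∃ B : Set ℝ, MeasurableSet B ∧ A ⊆ B ∧ B ∈ I)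
    (hinv : ∀ (x : ℝ) (A : Set ℝ), A ∈ I → (fun a => -a + x) '' A ∈ I)
    (hccc : ∀ F : Set (Set ℝ), (∀ B ∈ F, MeasurableSet B ∧ B ∉ I) →
      F.PairwiseDisjoint id → F.Countable)
    (hFub : ∀ C : Set (ℝ × ℝ), MeasurableSet C →
      {x : ℝ | {y : ℝ | (x, y) ∈ C} ∉ I} ∈ I →
      {y : ℝ | {x : ℝ | (x, y) ∈ C} ∉ I} ∈ I) :
    ∀ B : Set ℝ, MeasurableSet B → B ∉ I →
      (∃ (A : Set ℝ) (x : ℝ), A ∉ I ∧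
          #(↥A) = sInf {c : Cardinal | ∃ A' : Set ℝ, A' ∉ I ∧ #(↥A') = c} ∧
          B ∩ ((fun a => a - x) '' A) ∉ I) ∧
      (∃ A' ⊆ B, A' ∉ I ∧
          #(↥A') = sInf {c : Cardinal | ∃ A : Set ℝ, A ∉ I ∧ #(↥A) = c}) := by
  intro B hB hBI
  have hI : IsSigmaIdeal_s6 I := ⟨hdown, hunion, hdown ∅ {0} (empty_subset _) (hsing 0)⟩
  obtain ⟨A, hAI, hAcard⟩ := exists_mk_eq_nonCard hBI
  obtain ⟨H, hAH⟩ := exists_isBorelHull hI hbase hccc A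
  obtain ⟨x, hx⟩ := exists_inter_preimage_add_not_mem hI
    (fun t _ => preimage_add_const_mem hinv t) hFub hAH hAI hB hBI
  rw [← image_sub_right] at hx
  refine ⟨⟨A, x, hAI, hAcard, hx⟩, _, inter_subset_left, hx, le_antisymm ?_ (nonCard_le_mk hx)⟩
  calc #↥(B ∩ (· - x) '' A) ≤ #↥((· - x) '' A) := mk_le_mk_of_subset inter_subset_right
    _ ≤ #A := mk_image_le
    _ = nonCard I := hAcard

/-- ccc + Fubini Property implies every Borel I-positive set contains
an I-positive set of the form B ∩ (A - x) with |A| = non(I); consequently it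
contains a witness for non(I). -/
theorem stmt_6 (I : Set (Set ℝ))
    (hdown : ∀ A B : Set ℝ, A ⊆ B → B ∈ I → A ∈ I)
    (hunion : ∀ f : ℕ → Set ℝ, (∀ n, f n ∈ I) → (⋃ n, f n) ∈ I)
    (hnontriv : (Set.univ : Set ℝ) ∉ I)
    (hsing : ∀ x : ℝ, ({x} : Set ℝ) ∈ I)
    (hbase : ∀ A ∈ I, ∃ B : Set ℝ, MeasurableSet B ∧ A ⊆ B ∧ B ∈ I)
    (hinv : ∀ (x : ℝ) (A : Set ℝ), A ∈ I → (fun a => -a + x) '' A ∈ I)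
    (hccc : ∀ F : Set (Set ℝ), (∀ B ∈ F, MeasurableSet B ∧ B ∉ I) →
      F.PairwiseDisjoint id → F.Countable)
    (hFub : ∀ C : Set (ℝ × ℝ), MeasurableSet C →
      {x : ℝ | {y : ℝ | (x, y) ∈ C} ∉ I} ∈ I →
      {y : ℝ | {x : ℝ | (x, y) ∈ C} ∉ I} ∈ I) :
    ∀ B : Set ℝ, MeasurableSet B → B ∉ I →
      (∃ (A : Set ℝ) (x : ℝ), A ∉ I ∧
          #(↥A) = sInf {c : Cardinal | ∃ A' : Set ℝ, A' ∉ I ∧ #(↥A') = c} ∧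
          B ∩ ((fun a => a - x) '' A) ∉ I) ∧
      (∃ A' ⊆ B, A' ∉ I ∧
          #(↥A') = sInf {c : Cardinal | ∃ A : Set ℝ, A ∉ I ∧ #(↥A) = c}) :=
  stmt_6_general I hdown hunion hsing hbase hinv hccc hFub
end

section
/- Every perfect set P ⊆ ℝⁿ contains a perfect subset Q such that for every x ≠ 0, the intersection Q ∩ (Q + x) contains at most one point. -/
/-!
Build a Cantor scheme inside `P`: at level `k` there are `2 ^ k` points of `P`, indexed by binary
words, each within the previous radius of its parent, and forming a Sidon family. A finite Sidon
family can be extended by any point outside a finite set of bad values, and every ball around a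
point of the perfect set `P` meets `P` in infinitely many points, so each level can be refined.
A finite Sidon family is quantitatively Sidon, so the radii can be chosen to halve at each level
and to stay small against the gap of the current level. The limit map from Cantor space is then
continuous, and a relation `F σ - F τ = F σ' - F τ'` between limit points forces a trivial relation
between the truncations at every level, hence is trivial. Its range is the required set `Q`.
-/

open Set Filter Topology Function PiNat

section Sidon

variable {ι κ G : Type*} [AddCommGroup G]

def IsSidon (q : ι → G) : Prop :=
  ∀ i j k l, q i - q j = q k - q l → i = j ∧ k = l ∨ i = k ∧ j = l

theorem IsSidon.injective {q : ι → G} (hq : IsSidon q) : Injective q := fun i j h ↦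
  (hq i j j j (by rw [h])).elim And.left And.left

theorem IsSidon.comp {q : ι → G} (hq : IsSidon q) {f : κ → ι} (hf : Injective f) :
    IsSidon (q ∘ f) := fun i j k l h ↦ by
  simpa only [hf.eq_iff] using hq _ _ _ _ h

theorem IsSidon.inter_image_add_range_subsingleton {q : ι → G} (hq : IsSidon q) {x : G}
    (hx : x ≠ 0) : (range q ∩ (· + x) '' range q).Subsingleton := by
  rintro _ ⟨⟨i, rfl⟩, _, ⟨j, rfl⟩, hij⟩ _ ⟨⟨k, rfl⟩, _, ⟨l, rfl⟩, hkl⟩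
  dsimp only at hij hkl
  have : q i - q j = q k - q l := by rw [← hij, ← hkl, add_sub_cancel_left, add_sub_cancel_left]
  rcases hq i j k l this with ⟨rfl, -⟩ | ⟨rfl, -⟩
  · exact absurd (add_eq_left.1 hij) hx
  · rfl

/-- In a relation between values of the extended family, `x` either occurs on one side only,
which `h₁` or `h₂` excludes, or it cancels and `hq` applies. -/
theorem IsSidon.option_elim [IsAddTorsionFree G] {q : ι → G} (hq : IsSidon q) {x : G}
    (h₁ : ∀ i j k, x ≠ q i + q j - q k) (h₂ : ∀ i j, x + x ≠ q i + q j) :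
    IsSidon (fun o : Option ι ↦ o.elim x q) := by
  rintro (_|i) (_|j) (_|k) (_|l) h <;>
    simp only [Option.elim_none, Option.elim_some, reduceCtorEq, Option.some.injEq] at h ⊢ <;>
    grind [IsSidon]

theorem exists_isSidon_forall_mem [IsAddTorsionFree G] [Finite ι] (S : ι → Set G)
    (hS : ∀ i, (S i).Infinite) : ∃ q : ι → G, (∀ i, q i ∈ S i) ∧ IsSidon q := by
  induction ι using Finite.induction_empty_option with
  | of_equiv e ih =>
    obtain ⟨q, hqS, hq⟩ := ih (S ∘ e) fun i ↦ hS (e i)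
    refine ⟨q ∘ e.symm, fun i ↦ by simpa using hqS (e.symm i), hq.comp e.symm.injective⟩
  | h_empty => exact ⟨fun i ↦ i.elim, fun i ↦ i.elim, fun i ↦ i.elim⟩
  | h_option ih =>
    obtain ⟨q, hqS, hq⟩ := ih (S ∘ some) fun i ↦ hS (some i)
    have hbad : ({y | ∃ i j k, y = q i + q j - q k} ∪ {y | ∃ i j, y + y = q i + q j}).Finite := by
      refine .union ((finite_range fun p : _ × _ × _ ↦ q p.1 + q p.2.1 - q p.2.2).subset ?_)
        (((finite_range fun p : _ × _ ↦ q p.1 + q p.2).preimage (f := fun y ↦ y + y) ?_).subset ?_)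
      · rintro _ ⟨i, j, k, rfl⟩
        exact ⟨(i, j, k), rfl⟩
      · refine Injective.injOn fun a b h ↦ IsAddTorsionFree.nsmul_right_injective two_ne_zero ?_
        simpa only [two_nsmul] using h
      · rintro _ ⟨i, j, hij⟩
        exact ⟨(i, j), hij.symm⟩
    obtain ⟨x, hxS, hx⟩ := ((hS none).sdiff hbad).nonempty
    simp only [mem_union, mem_ofPred_eq, not_or, not_exists] at hx
    refine ⟨fun o ↦ o.elim x q, ?_, hq.option_elim (fun i j k ↦ hx.1 i j k) fun i j ↦ hx.2 i j⟩
    rintro (_|i)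
    exacts [hxS, hqS i]

end Sidon

theorem forall_or_forall_of_antitone {α : Type*} [Preorder α] [IsDirectedOrder α] {A B : α → Prop}
    (hA : Antitone A) (hB : Antitone B) (h : ∀ k, A k ∨ B k) : (∀ k, A k) ∨ ∀ k, B k := by
  by_contra! ⟨⟨m, hm⟩, n, hn⟩
  obtain ⟨k, hmk, hnk⟩ := exists_ge_ge m n
  exact (h k).elim (fun hk ↦ hm (hA hmk hk)) fun hk ↦ hn (hB hnk hk)

theorem Preperfect.image_of_injective {X Y : Type*} [TopologicalSpace X] [TopologicalSpace Y]
    {C : Set X} (hC : Preperfect C) {f : X → Y} (hf : Continuous f) (hinj : Injective f) :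
    Preperfect (f '' C) := by
  rintro _ ⟨x, hx, rfl⟩
  simpa only [map_principal] using (hC x hx).map hf.continuousAt hinj

namespace PiNat

variable {α : Type*}

theorem restrict_eq_iff_mem_cylinder {σ τ : ℕ → α} {k : ℕ} :
    ((fun i : Fin k ↦ σ i) = fun i : Fin k ↦ τ i) ↔ τ ∈ cylinder σ k := by
  simp [funext_iff, Fin.forall_iff, eq_comm]

theorem eq_of_forall_mem_cylinder {σ τ : ℕ → α} (h : ∀ k, τ ∈ cylinder σ k) : σ = τ :=
  funext fun i ↦ (h (i + 1) i i.lt_succ_self).symm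

instance [TopologicalSpace α] [DiscreteTopology α] [Nontrivial α] : PerfectSpace (ℕ → α) where
  univ_preperfect σ _ := by
    refine accPt_iff_nhds.2 fun U hU ↦ ?_
    obtain ⟨_, ⟨x, k, rfl⟩, hσ, hsub⟩ := (isTopologicalBasis_cylinders _).mem_nhds_iff.1 hU
    obtain ⟨a, ha⟩ := exists_ne (σ k)
    refine ⟨update σ k a, ⟨hsub ?_, mem_univ _⟩, fun h ↦ ha (by simpa using congrFun h k)⟩
    rw [← mem_cylinder_iff_eq.1 hσ]
    exact update_mem_cylinder σ k a

end PiNat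

section Normed

variable {ι E : Type*} [NormedAddCommGroup E]

theorem norm_sub_sub_sub_le_of_sub_eq_sub {a b c d a' b' c' d' : E} (h : a - b = c - d) {r : ℝ}
    (ha : dist a' a ≤ r) (hb : dist b' b ≤ r) (hc : dist c' c ≤ r) (hd : dist d' d ≤ r) :
    ‖a' - b' - (c' - d')‖ ≤ 4 * r := by
  rw [dist_eq_norm] at ha hb hc hd
  calc ‖a' - b' - (c' - d')‖
      = ‖(a' - a) - (b' - b) - ((c' - c) - (d' - d)) + (a - b - (c - d))‖ := by congr 1; abel
    _ = ‖(a' - a) - (b' - b) - ((c' - c) - (d' - d))‖ := by rw [sub_eq_zero.2 h, add_zero]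
    _ ≤ ‖a' - a‖ + ‖b' - b‖ + (‖c' - c‖ + ‖d' - d‖) :=
        (norm_sub_le _ _).trans (add_le_add (norm_sub_le _ _) (norm_sub_le _ _))
    _ ≤ 4 * r := by linarith

theorem IsSidon.exists_pos_forall_norm_le [Finite ι] {q : ι → E} (hq : IsSidon q) :
    ∃ δ > 0, ∀ i j k l, ‖q i - q j - (q k - q l)‖ ≤ δ → i = j ∧ k = l ∨ i = k ∧ j = l := by
  have h : ∀ i j k l, ∀ᶠ δ in 𝓝[>] (0 : ℝ),
      ‖q i - q j - (q k - q l)‖ ≤ δ → i = j ∧ k = l ∨ i = k ∧ j = l := by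
    intro i j k l
    by_cases hijkl : q i - q j = q k - q l
    · exact .of_forall fun _ _ ↦ hq i j k l hijkl
    · have hpos : 0 < ‖q i - q j - (q k - q l)‖ := norm_pos_iff.2 (sub_ne_zero.2 hijkl)
      filter_upwards [nhdsWithin_le_nhds (eventually_lt_nhds hpos)] with δ hδ hle
      exact absurd hle hδ.not_ge
  simp only [← eventually_all] at h
  exact (h.and self_mem_nhdsWithin).exists.imp fun δ hδ ↦ ⟨hδ.2, hδ.1⟩

theorem Perfect.exists_isSidon_near [IsAddTorsionFree E] [Finite ι] {P : Set E} (hP : Perfect P)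
    {c : ι → E} (hc : ∀ i, c i ∈ P) {r : ℝ} (hr : 0 < r) :
    ∃ q : ι → E, (∀ i, q i ∈ P ∧ dist (q i) (c i) < r) ∧ IsSidon q := by
  obtain ⟨q, hq, hsidon⟩ := exists_isSidon_forall_mem (fun i ↦ Metric.ball (c i) r ∩ P)
    fun i ↦ .of_accPt ((hP.acc _ (hc i)).nhds_inter (Metric.ball_mem_nhds _ hr))
  exact ⟨q, fun i ↦ ⟨(hq i).2, (hq i).1⟩, hsidon⟩

/-- The factor `8` absorbs the four errors, each at most `2 * radius`, made when points of this
level are replaced by the limit points below them. -/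
structure SidonStage (P : Set E) (k : ℕ) where
  point : (Fin k → Bool) → E
  radius : ℝ
  point_mem : ∀ s, point s ∈ P
  radius_pos : 0 < radius
  sidon : ∀ s t u v, ‖point s - point t - (point u - point v)‖ ≤ 8 * radius →
    s = t ∧ u = v ∨ s = u ∧ t = v

namespace SidonStage

variable {P : Set E} {k : ℕ}

def ofMem {x : E} (hx : x ∈ P) : SidonStage P 0 where
  point _ := x
  radius := 1
  point_mem _ := hx
  radius_pos := one_pos
  sidon s t u v _ := .inl ⟨Subsingleton.elim s t, Subsingleton.elim u v⟩

def IsRefinedBy (S : SidonStage P k) (T : SidonStage P (k + 1)) : Prop :=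
  T.radius ≤ S.radius / 2 ∧ ∀ s, dist (T.point s) (S.point (Fin.init s)) ≤ S.radius

theorem exists_isRefinedBy [IsAddTorsionFree E] (hP : Perfect P) (S : SidonStage P k) :
    ∃ T : SidonStage P (k + 1), S.IsRefinedBy T := by
  obtain ⟨q, hq, hsidon⟩ :=
    hP.exists_isSidon_near (c := fun s : Fin (k + 1) → Bool ↦ S.point (Fin.init s))
      (fun s ↦ S.point_mem _) S.radius_pos
  obtain ⟨δ, hδ, hqδ⟩ := hsidon.exists_pos_forall_norm_le
  refine ⟨⟨q, min (S.radius / 2) (δ / 8), fun s ↦ (hq s).1, by have := S.radius_pos; positivity,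
    fun s t u v h ↦ hqδ s t u v ?_⟩, min_le_left _ _, fun s ↦ (hq s).2.le⟩
  calc _ ≤ 8 * min (S.radius / 2) (δ / 8) := h
    _ ≤ 8 * (δ / 8) := by gcongr; exact min_le_right _ _
    _ = δ := by ring

end SidonStage

structure SidonScheme (P : Set E) where
  stage : ∀ k, SidonStage P k
  isRefinedBy : ∀ k, (stage k).IsRefinedBy (stage (k + 1))

theorem Perfect.nonempty_sidonScheme [IsAddTorsionFree E] {P : Set E} (hP : Perfect P)
    (hne : P.Nonempty) : Nonempty (SidonScheme P) := by
  obtain ⟨x, hx⟩ := hne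
  choose next hnext using fun k (S : SidonStage P k) ↦ S.exists_isRefinedBy hP
  exact ⟨⟨fun k ↦ Nat.rec (.ofMem hx) next k, fun k ↦ hnext k _⟩⟩

namespace SidonScheme

variable {P : Set E} (S : SidonScheme P)

def radius (k : ℕ) : ℝ := (S.stage k).radius

def approx (σ : ℕ → Bool) (k : ℕ) : E := (S.stage k).point fun i : Fin k ↦ σ i

theorem radius_add_le (k m : ℕ) : S.radius (k + m) ≤ S.radius k / 2 ^ m := by
  induction m with
  | zero => simp
  | succ m ih =>
    calc S.radius (k + m + 1) ≤ S.radius (k + m) / 2 := (S.isRefinedBy (k + m)).1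
      _ ≤ S.radius k / 2 ^ m / 2 := by gcongr
      _ = S.radius k / 2 ^ (m + 1) := by ring

theorem tendsto_radius : Tendsto S.radius atTop (𝓝 0) :=
  squeeze_zero (fun k ↦ (S.stage k).radius_pos.le) (fun k ↦ by simpa using S.radius_add_le 0 k)
    (tendsto_const_nhds.div_atTop (tendsto_pow_atTop_atTop_of_one_lt one_lt_two))

theorem dist_approx_succ_le (σ : ℕ → Bool) (k : ℕ) :
    dist (S.approx σ k) (S.approx σ (k + 1)) ≤ S.radius k := by
  rw [dist_comm]
  exact (S.isRefinedBy k).2 _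

theorem approx_eq_of_mem_cylinder {σ τ : ℕ → Bool} {k : ℕ} (h : τ ∈ cylinder σ k) :
    S.approx τ k = S.approx σ k :=
  congrArg (S.stage k).point (restrict_eq_iff_mem_cylinder.2 h).symm

theorem cauchySeq_approx (σ : ℕ → Bool) : CauchySeq (S.approx σ) :=
  cauchySeq_of_le_geometric_two (C := 2 * S.radius 0) fun k ↦
    (S.dist_approx_succ_le σ k).trans (by simpa [mul_div_assoc] using S.radius_add_le 0 k)

variable [CompleteSpace E]

noncomputable def limit (σ : ℕ → Bool) : E := limUnder atTop (S.approx σ)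

theorem tendsto_approx (σ : ℕ → Bool) : Tendsto (S.approx σ) atTop (𝓝 (S.limit σ)) :=
  (S.cauchySeq_approx σ).tendsto_limUnder

theorem dist_approx_limit_le (σ : ℕ → Bool) (k : ℕ) :
    dist (S.approx σ k) (S.limit σ) ≤ 2 * S.radius k := by
  have hstep (m : ℕ) :
      dist (S.approx σ (m + k)) (S.approx σ (m + 1 + k)) ≤ 2 * S.radius k / 2 / 2 ^ m := by
    rw [add_right_comm, mul_div_cancel_left₀ _ two_ne_zero, add_comm m k]
    exact (S.dist_approx_succ_le σ (k + m)).trans (S.radius_add_le k m)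
  simpa using dist_le_of_le_geometric_two_of_tendsto₀ hstep
    ((tendsto_add_atTop_iff_nat k).2 (S.tendsto_approx σ))

theorem limit_mem (hP : IsClosed P) (σ : ℕ → Bool) : S.limit σ ∈ P :=
  hP.mem_of_tendsto (S.tendsto_approx σ) (.of_forall fun k ↦ (S.stage k).point_mem _)

theorem continuous_limit : Continuous S.limit := by
  refine Metric.continuous_iff'.2 fun σ ε hε ↦ ?_
  obtain ⟨k, hk⟩ := (S.tendsto_radius.eventually (gt_mem_nhds (by positivity : 0 < ε / 4))).exists
  filter_upwards [(isOpen_cylinder _ σ k).mem_nhds (self_mem_cylinder σ k)] with τ hτ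
  calc dist (S.limit τ) (S.limit σ)
      ≤ dist (S.approx τ k) (S.limit τ) + dist (S.approx σ k) (S.limit σ) := by
        rw [S.approx_eq_of_mem_cylinder hτ]; exact dist_triangle_left _ _ _
    _ ≤ 2 * S.radius k + 2 * S.radius k :=
        add_le_add (S.dist_approx_limit_le τ k) (S.dist_approx_limit_le σ k)
    _ < ε := by linarith

theorem isSidon_limit : IsSidon S.limit := by
  intro σ τ σ' τ' h
  have hlevel (k : ℕ) : τ ∈ cylinder σ k ∧ τ' ∈ cylinder σ' k ∨
      σ' ∈ cylinder σ k ∧ τ' ∈ cylinder τ k := by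
    simpa only [restrict_eq_iff_mem_cylinder] using (S.stage k).sidon _ _ _ _
      ((norm_sub_sub_sub_le_of_sub_eq_sub h (S.dist_approx_limit_le σ k)
        (S.dist_approx_limit_le τ k) (S.dist_approx_limit_le σ' k)
        (S.dist_approx_limit_le τ' k)).trans_eq (by rw [radius]; ring))
  rcases forall_or_forall_of_antitone
    (fun _ _ hmn h ↦ ⟨cylinder_anti σ hmn h.1, cylinder_anti σ' hmn h.2⟩)
    (fun _ _ hmn h ↦ ⟨cylinder_anti σ hmn h.1, cylinder_anti τ hmn h.2⟩) hlevel with h | h <;>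
    [left; right] <;>
    exact ⟨eq_of_forall_mem_cylinder fun k ↦ (h k).1, eq_of_forall_mem_cylinder fun k ↦ (h k).2⟩

end SidonScheme

end Normed

/-- Every perfect set P ⊆ ℝⁿ contains a perfect subset Q such that
|Q ∩ (Q + x)| ≤ 1 for every x ≠ 0. -/
theorem stmt_7 (n : ℕ) (P : Set (Fin n → ℝ)) (hP : Perfect P) (hne : P.Nonempty) :
    ∃ Q ⊆ P, Perfect Q ∧ Q.Nonempty ∧
      ∀ x : Fin n → ℝ, x ≠ 0 → (Q ∩ ((fun q => q + x) '' Q)).Subsingleton := by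
  obtain ⟨S⟩ := hP.nonempty_sidonScheme hne
  refine ⟨range S.limit, range_subset_iff.2 (S.limit_mem hP.closed),
    ⟨(isCompact_range S.continuous_limit).isClosed, ?_⟩, range_nonempty _,
    fun x hx ↦ S.isSidon_limit.inter_image_add_range_subsingleton hx⟩
  rw [← image_univ]
  exact PerfectSpace.univ_preperfect.image_of_injective S.continuous_limit S.isSidon_limit.injective
end

section
/- Let Q ⊆ ℝ be a perfect set such that |Q ∩ (Q + x)| ≤ 1 for every x ≠ 0, and let B = {(x, y) ∈ ℝ² : y ∈ Q, y - x ∈ Q, x ≠ 0}. Then B is Borel, every vertical slice B_x = {y : (x,y) ∈ B} has at most one point, and for every y ∈ Q the horizontal slice B^y = {x : (x,y) ∈ B} equals (y - Q) \ {0}, which is uncountable. -/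
/-!
The vertical slice of `B` at `x ≠ 0` is `Q ∩ (Q + x)`, hence a subsingleton. The horizontal slice
at `y ∈ Q` is the reflection `y - Q` with at most one point removed; it is uncountable because a
nonempty perfect set in a complete metric space contains a copy of the Cantor space.
-/

open Set

theorem Perfect.not_countable {α : Type*} [MetricSpace α] [CompleteSpace α] {C : Set α}
    (hC : Perfect C) (hne : C.Nonempty) : ¬ C.Countable := by
  intro hc
  obtain ⟨f, hran, -, hinj⟩ := hC.exists_nat_bool_injection hne
  have : Countable (ℕ → Bool) := by
    simpa [← countable_univ_iff] using (hc.mono hran).preimage hinj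
  have h := Cardinal.mk_le_aleph0_iff.2 this
  rw [← Cardinal.power_def, Cardinal.mk_bool, Cardinal.mk_nat, Cardinal.two_power_aleph0] at h
  exact Cardinal.aleph0_lt_continuum.not_ge h

section DifferenceGraph

variable {G : Type*} [AddCommGroup G]

def differenceGraph (Q : Set G) : Set (G × G) :=
  {p | p.2 ∈ Q ∧ p.2 - p.1 ∈ Q ∧ p.1 ≠ 0}

theorem measurableSet_differenceGraph [MeasurableSpace G] [MeasurableSub₂ G]
    [MeasurableSingletonClass G] {Q : Set G} (hQ : MeasurableSet Q) :
    MeasurableSet (differenceGraph Q) :=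
  (hQ.preimage measurable_snd).inter <|
    (hQ.preimage (measurable_snd.sub measurable_fst)).inter
      ((measurableSet_singleton 0).preimage measurable_fst).compl

theorem differenceGraph_verticalSlice_subsingleton {Q : Set G}
    (hsmall : ∀ x : G, x ≠ 0 → (Q ∩ ((fun q => q + x) '' Q)).Subsingleton) (x : G) :
    {y | (x, y) ∈ differenceGraph Q}.Subsingleton := by
  rintro y₁ ⟨hy₁, hq₁, hx⟩ y₂ ⟨hy₂, hq₂, -⟩
  exact hsmall x hx ⟨hy₁, y₁ - x, hq₁, sub_add_cancel y₁ x⟩ ⟨hy₂, y₂ - x, hq₂, sub_add_cancel y₂ x⟩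

theorem differenceGraph_horizontalSlice {Q : Set G} {y : G} (hy : y ∈ Q) :
    {x | (x, y) ∈ differenceGraph Q} = ((fun q => y - q) '' Q) \ {0} := by
  ext x
  simp only [differenceGraph, mem_ofPred_eq, mem_sdiff, mem_image, mem_singleton_iff]
  constructor
  · rintro ⟨-, hq, hx⟩
    exact ⟨⟨y - x, hq, sub_sub_cancel y x⟩, hx⟩
  · rintro ⟨⟨q, hq, rfl⟩, hx⟩
    exact ⟨hy, by rwa [sub_sub_cancel], hx⟩

theorem countable_of_countable_sub_image_diff_zero {Q : Set G} {y : G}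
    (h : (((fun q => y - q) '' Q) \ {0}).Countable) : Q.Countable := by
  have himage : ((fun q => y - q) '' Q).Countable := h.of_sdiff (countable_singleton 0)
  simpa [preimage_image_eq Q (sub_right_injective (b := y))] using
    himage.preimage (sub_right_injective (b := y))

end DifferenceGraph

/-- Properties of B = {(x,y) : y ∈ Q, y - x ∈ Q, x ≠ 0} for a
perfect set Q with translates meeting it in at most one point. -/
theorem stmt_9 (Q : Set ℝ) (hQ : Perfect Q) (hne : Q.Nonempty)
    (hsmall : ∀ x : ℝ, x ≠ 0 → (Q ∩ ((fun q => q + x) '' Q)).Subsingleton)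
    (B : Set (ℝ × ℝ)) (hB : B = {p : ℝ × ℝ | p.2 ∈ Q ∧ p.2 - p.1 ∈ Q ∧ p.1 ≠ 0}) :
    MeasurableSet B ∧
    (∀ x : ℝ, ({y : ℝ | (x, y) ∈ B}).Subsingleton) ∧
    (∀ y ∈ Q, {x : ℝ | (x, y) ∈ B} = ((fun q => y - q) '' Q) \ {0} ∧
      ¬ ({x : ℝ | (x, y) ∈ B}).Countable) := by
  change B = differenceGraph Q at hB
  subst hB
  refine ⟨measurableSet_differenceGraph hQ.closed.measurableSet,
    differenceGraph_verticalSlice_subsingleton hsmall, fun y hy => ?_⟩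
  rw [differenceGraph_horizontalSlice hy]
  exact ⟨rfl, fun hc => hQ.not_countable hne (countable_of_countable_sub_image_diff_zero hc)⟩
end

section
/- If I is a tall σ-ideal, then every set L ⊆ X of the form L = B Δ I' with B Borel and I' ∈ I, where B ∉ I, satisfies: there exists a perfect set P ∈ I with |L ∩ P| = c. In particular no I-Luzin set of cardinality continuum is I-measurable. -/
open Cardinal Set MeasureTheory

/-
For `B` Borel and `I`-positive and `J ∈ I`, enlarge `J` to a Borel set `C ∈ I`; then `B \ C` is
Borel and `I`-positive, so by tallness it contains a nonempty perfect set `P ∈ I`, which lies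
inside `B ∆ J` and, being perfect in a Polish space, has size continuum. Since `σ(Borel ∪ I)`
consists of the sets `B ∆ J`, an `I`-measurable `I`-Luzin set `L` of size continuum is either
covered by `B ∪ J ∈ I` (if `B ∈ I`) or contains such a `P`; both contradict `|L ∩ I'| < |L|`
for `I' ∈ I`.
-/

theorem Perfect.mk_eq_continuum {X : Type*} [TopologicalSpace X] [PolishSpace X] {P : Set X}
    (hP : Perfect P) (hne : P.Nonempty) : #P = 𝔠 := by
  apply le_antisymm
  · borelize X
    obtain ⟨f, -, hf⟩ := MeasurableSpace.measurable_injection_nat_bool_of_countablySeparated X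
    have hX : #X ≤ 𝔠 := by simpa using lift_mk_le_lift_mk_of_injective hf
    exact (mk_set_le P).trans hX
  · let := TopologicalSpace.upgradeIsCompletelyMetrizable X
    obtain ⟨f, hfP, -, hf⟩ := hP.exists_nat_bool_injection hne
    have := lift_mk_le_lift_mk_of_injective (f := fun g => (⟨f g, hfP ⟨g, rfl⟩⟩ : P))
      fun a b h => hf (congrArg Subtype.val h)
    simpa using this

structure IsSigmaIdeal_s12 {X : Type*} (I : Set (Set X)) : Prop where
  mono : ∀ A B : Set X, A ⊆ B → B ∈ I → A ∈ I
  iUnion_mem : ∀ f : ℕ → Set X, (∀ n, f n ∈ I) → (⋃ n, f n) ∈ I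

def IsSigmaIdeal_s12.IsTall {X : Type*} [TopologicalSpace X] [MeasurableSpace X]
    (I : Set (Set X)) : Prop :=
  ∀ B : Set X, MeasurableSet B → B ∉ I → ∃ P ⊆ B, Perfect P ∧ P.Nonempty ∧ P ∈ I

def IsSigmaIdeal_s12.IsLuzin {X : Type*} (I : Set (Set X)) (L : Set X) : Prop :=
  ∀ I' ∈ I, #(L ∩ I' : Set X) < #L

def IsSigmaIdeal_s12.HasMeasurableBase {X : Type*} [MeasurableSpace X] (I : Set (Set X)) : Prop :=
  ∀ A ∈ I, ∃ B : Set X, MeasurableSet B ∧ A ⊆ B ∧ B ∈ I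

namespace IsSigmaIdeal_s12

variable {X : Type*} {I : Set (Set X)}

theorem union_mem_s12 (hI : IsSigmaIdeal_s12 I) {A B : Set X} (hA : A ∈ I) (hB : B ∈ I) :
    A ∪ B ∈ I :=
  hI.mono _ _
    (union_subset (subset_iUnion_of_subset 0 (by simp)) (subset_iUnion_of_subset 1 (by simp)))
    (hI.iUnion_mem (fun n => if n = 0 then A else B) fun n => by split_ifs <;> assumption)

theorem diff_notMem (hI : IsSigmaIdeal_s12 I) {B C : Set X} (hB : B ∉ I) (hC : C ∈ I) :
    B \ C ∉ I :=
  fun h => hB (hI.mono _ _ (subset_sdiff_union B C) (hI.union_mem_s12 h hC))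

theorem exists_eq_symmDiff_of_measurableSet_generateFrom [MeasurableSpace X]
    (hI : IsSigmaIdeal_s12 I) (h0 : ∅ ∈ I) {L : Set X}
    (hL : MeasurableSet[MeasurableSpace.generateFrom {s | MeasurableSet s ∨ s ∈ I}] L) :
    ∃ B J : Set X, MeasurableSet B ∧ J ∈ I ∧ L = symmDiff B J := by
  induction L, hL using MeasurableSpace.generateFrom_induction with
  | hC t ht _ =>
    rcases ht with ht | ht
    · exact ⟨t, ∅, ht, h0, (symmDiff_bot t).symm⟩
    · exact ⟨∅, t, .empty, ht, (bot_symmDiff t).symm⟩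
  | empty => exact ⟨∅, ∅, .empty, h0, (bot_symmDiff ∅).symm⟩
  | compl t _ ih =>
    obtain ⟨B, J, hB, hJ, rfl⟩ := ih
    refine ⟨Bᶜ, J, hB.compl, hJ, ?_⟩
    ext x
    simp only [mem_compl_iff, mem_symmDiff]
    tauto
  | iUnion s _ ih =>
    choose B J hB hJ hs using ih
    refine ⟨⋃ n, B n, symmDiff (⋃ n, B n) (⋃ n, s n), .iUnion hB, ?_,
      (symmDiff_symmDiff_cancel_left _ _).symm⟩
    refine hI.mono _ _ (iUnion_symmDiff_iUnion_subset.trans ?_) (hI.iUnion_mem J hJ)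
    simp [hs, symmDiff_symmDiff_cancel_left]

theorem exists_perfect_subset_symmDiff [TopologicalSpace X] [MeasurableSpace X]
    (hI : IsSigmaIdeal_s12 I) (htall : IsTall I) (hbase : HasMeasurableBase I) {B J : Set X}
    (hB : MeasurableSet B) (hBI : B ∉ I) (hJ : J ∈ I) :
    ∃ P : Set X, Perfect P ∧ P.Nonempty ∧ P ∈ I ∧ P ⊆ symmDiff B J := by
  obtain ⟨C, hC, hJC, hCI⟩ := hbase J hJ
  obtain ⟨P, hPBC, hP, hPne, hPI⟩ := htall (B \ C) (hB.diff hC) (hI.diff_notMem hBI hCI)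
  exact ⟨P, hP, hPne, hPI, fun x hx => Or.inl ⟨(hPBC hx).1, fun hxJ => (hPBC hx).2 (hJC hxJ)⟩⟩

theorem exists_perfect_mk_symmDiff_inter_eq_continuum [TopologicalSpace X] [PolishSpace X]
    [MeasurableSpace X]
    (hI : IsSigmaIdeal_s12 I) (htall : IsTall I) (hbase : HasMeasurableBase I) {B J : Set X}
    (hB : MeasurableSet B) (hBI : B ∉ I) (hJ : J ∈ I) :
    ∃ P : Set X, Perfect P ∧ P.Nonempty ∧ P ∈ I ∧ #(symmDiff B J ∩ P : Set X) = 𝔠 := by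
  obtain ⟨P, hP, hPne, hPI, hPL⟩ := hI.exists_perfect_subset_symmDiff htall hbase hB hBI hJ
  exact ⟨P, hP, hPne, hPI, by rw [inter_eq_self_of_subset_right hPL, hP.mk_eq_continuum hPne]⟩

theorem not_isLuzin_symmDiff [TopologicalSpace X] [PolishSpace X] [MeasurableSpace X]
    (hI : IsSigmaIdeal_s12 I) (htall : IsTall I) (hbase : HasMeasurableBase I) {B J : Set X}
    (hB : MeasurableSet B) (hJ : J ∈ I) (hcard : #(symmDiff B J : Set X) = 𝔠) :
    ¬ IsLuzin I (symmDiff B J) := by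
  intro hLuzin
  by_cases hBI : B ∈ I
  · have hcover : symmDiff B J ⊆ B ∪ J := symmDiff_le_sup
    simpa [inter_eq_self_of_subset_left hcover] using hLuzin _ (hI.union_mem_s12 hBI hJ)
  · obtain ⟨P, -, -, hPI, hLP⟩ :=
      hI.exists_perfect_mk_symmDiff_inter_eq_continuum htall hbase hB hBI hJ
    simpa [hLP, hcard] using hLuzin P hPI

end IsSigmaIdeal_s12

theorem stmt_12_general {X : Type*} [TopologicalSpace X] [PolishSpace X]
    [MeasurableSpace X] (I : Set (Set X))
    (hdown : ∀ A B : Set X, A ⊆ B → B ∈ I → A ∈ I)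
    (hunion : ∀ f : ℕ → Set X, (∀ n, f n ∈ I) → (⋃ n, f n) ∈ I)
    (hsing : ∀ x : X, ({x} : Set X) ∈ I)
    (hbase : ∀ A ∈ I, ∃ B : Set X, MeasurableSet B ∧ A ⊆ B ∧ B ∈ I)
    (htall : ∀ B : Set X, MeasurableSet B → B ∉ I →
      ∃ P ⊆ B, Perfect P ∧ P.Nonempty ∧ P ∈ I) :
    (∀ L B I' : Set X, MeasurableSet B → B ∉ I → I' ∈ I → L = symmDiff B I' →
      ∃ P : Set X, Perfect P ∧ P.Nonempty ∧ P ∈ I ∧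
        #(↥(L ∩ P)) = Cardinal.continuum) ∧
    (∀ L : Set X, #(↥L) = Cardinal.continuum →
      (∀ I' ∈ I, #(↥(L ∩ I')) < #(↥L)) →
      ¬ @MeasurableSet X (MeasurableSpace.generateFrom
        {s : Set X | MeasurableSet s ∨ s ∈ I}) L) := by
  have hI : IsSigmaIdeal_s12 I := ⟨hdown, hunion⟩
  refine ⟨fun L B J hB hBI hJ hL =>
    hL ▸ hI.exists_perfect_mk_symmDiff_inter_eq_continuum htall hbase hB hBI hJ,
    fun L hcard hLuzin hL => ?_⟩
  obtain ⟨⟨x, -⟩⟩ : Nonempty L := mk_ne_zero_iff.mp (hcard ▸ continuum_ne_zero)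
  obtain ⟨B, J, hB, hJ, rfl⟩ :=
    hI.exists_eq_symmDiff_of_measurableSet_generateFrom (hdown ∅ {x} (empty_subset _) (hsing x)) hL
  exact hI.not_isLuzin_symmDiff htall hbase hB hJ hcard hLuzin

/-- If I is tall then every set of the form B Δ I' with B Borel
I-positive, I' ∈ I, meets some perfect set from I in continuum many points;
in particular no I-Luzin set of cardinality continuum is I-measurable. -/
theorem stmt_12 {X : Type*} [TopologicalSpace X] [PolishSpace X]
    [MeasurableSpace X] [BorelSpace X] (I : Set (Set X))
    (hdown : ∀ A B : Set X, A ⊆ B → B ∈ I → A ∈ I)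
    (hunion : ∀ f : ℕ → Set X, (∀ n, f n ∈ I) → (⋃ n, f n) ∈ I)
    (hnontriv : (Set.univ : Set X) ∉ I)
    (hsing : ∀ x : X, ({x} : Set X) ∈ I)
    (hbase : ∀ A ∈ I, ∃ B : Set X, MeasurableSet B ∧ A ⊆ B ∧ B ∈ I)
    (htall : ∀ B : Set X, MeasurableSet B → B ∉ I →
      ∃ P ⊆ B, Perfect P ∧ P.Nonempty ∧ P ∈ I) :
    (∀ L B I' : Set X, MeasurableSet B → B ∉ I → I' ∈ I → L = symmDiff B I' →
      ∃ P : Set X, Perfect P ∧ P.Nonempty ∧ P ∈ I ∧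
        #(↥(L ∩ P)) = Cardinal.continuum) ∧
    (∀ L : Set X, #(↥L) = Cardinal.continuum →
      (∀ I' ∈ I, #(↥(L ∩ I')) < #(↥L)) →
      ¬ @MeasurableSet X (MeasurableSpace.generateFrom
        {s : Set X | MeasurableSet s ∨ s ∈ I}) L) :=
  stmt_12_general I hdown hunion hsing hbase htall
end
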